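/- Let k° be a valuation ring with a nonzero nonunit π, and let A = k°[t_0,…,t_m, v_1,…,v_r]/(t_0⋯t_m − π). Fix l > 0, set v = (v_1⋯v_r)^l and d = (m+1)l. Then the v-chart of the blowing up of Spec(A) along the ideal (t_0,…,t_m, v) is isomorphic to Spec(k°[t'_0,…,t'_m, v_1,…,v_r]/(t'_0⋯t'_m·v_1^d⋯v_r^d − π)), where t'_i corresponds to t_i/v. -/

import Mathlib

open MvPolynomial

/-- Variables: `Sum.inl i = tᵢ`, `Sum.inr (Sum.inl i) = t'ᵢ`, `Sum.inr (Sum.inr j) = vⱼ`. -/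
abbrev BlowupVars (m r : ℕ) := Fin (m + 1) ⊕ (Fin (m + 1) ⊕ Fin r)

/-- The element `v = (v₁⋯v_r)^l`. -/
noncomputable def blowupV (K0 : Type) [CommRing K0] (m r l : ℕ) :
    MvPolynomial (BlowupVars m r) K0 :=
  (∏ j : Fin r, X (Sum.inr (Sum.inr j))) ^ l

/-- The relations of the `v`-chart of the blowup of
`A = k°[t,v]/(t₀⋯t_m − π)` along `(t₀,…,t_m, v)`: the relation `t₀⋯t_m = π`
together with `v·t'ᵢ = tᵢ` for each `i`. -/
noncomputable def blowupChartRels (K0 : Type) [CommRing K0] (m r l : ℕ) (π : K0) :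
    Set (MvPolynomial (BlowupVars m r) K0) :=
  {(∏ i : Fin (m + 1), X (Sum.inl i)) - C π} ∪
    {p | ∃ i : Fin (m + 1),
      p = blowupV K0 m r l * X (Sum.inr (Sum.inl i)) - X (Sum.inl i)}

/-- The `v`-chart of the blowup: the quotient by the chart relations, further divided by
its `v`-torsion (the kernel of the map to the localization away from `v`). -/
noncomputable def blowupChart (K0 : Type) [CommRing K0] (m r l : ℕ) (π : K0) : Type :=
  letI Bq := MvPolynomial (BlowupVars m r) K0 ⧸ Ideal.span (blowupChartRels K0 m r l π)
  Bq ⧸ RingHom.ker (algebraMap Bq (Localization.Away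
    (Ideal.Quotient.mk (Ideal.span (blowupChartRels K0 m r l π)) (blowupV K0 m r l))))

noncomputable instance (K0 : Type) [CommRing K0] (m r l : ℕ) (π : K0) :
    CommRing (blowupChart K0 m r l π) := by
  unfold blowupChart; infer_instance

/-- The target ring `k°[t'₀,…,t'_m,v₁,…,v_r]/(t'₀⋯t'_m·v₁^d⋯v_r^d − π)`, `d = (m+1)l`. -/
noncomputable def blowupChartModel (K0 : Type) [CommRing K0] (m r l : ℕ) (π : K0) : Type :=
  MvPolynomial (Fin (m + 1) ⊕ Fin r) K0 ⧸ Ideal.span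
    {(∏ i : Fin (m + 1), X (Sum.inl i)) *
      (∏ j : Fin r, (X (Sum.inr j) : MvPolynomial (Fin (m + 1) ⊕ Fin r) K0) ^ ((m + 1) * l))
      - C π}

noncomputable instance (K0 : Type) [CommRing K0] (m r l : ℕ) (π : K0) :
    CommRing (blowupChartModel K0 m r l π) := by
  unfold blowupChartModel; infer_instance

/-!
Substituting `tᵢ = v·t'ᵢ` eliminates the variables `tᵢ`: before `v`-torsion is removed,
the chart is already `k°[t',v]/(t'₀⋯t'_m·v^(m+1) − π)`, and `v^(m+1) = v₁^d⋯v_r^d`. In this ring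
every `vⱼ` is a nonzerodivisor, being a prime of the polynomial ring that does not divide the
relation (whose constant term is `−π ≠ 0`). So `v` has no torsion and the chart is this ring.
-/

theorem Ideal.Quotient.mk_mem_nonZeroDivisors_of_prime_of_not_dvd {R : Type*} [CommRing R]
    [IsDomain R] {p g : R} (hp : Prime p) (hpg : ¬ p ∣ g) :
    Ideal.Quotient.mk (Ideal.span {g}) p ∈ nonZeroDivisors (R ⧸ Ideal.span {g}) := by
  rw [mem_nonZeroDivisors_iff_right]
  intro x hx
  obtain ⟨h, rfl⟩ := Ideal.Quotient.mk_surjective x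
  rw [← map_mul, Ideal.Quotient.eq_zero_iff_mem, Ideal.mem_span_singleton] at hx
  obtain ⟨q, hq⟩ := hx
  obtain ⟨q', rfl⟩ := (hp.dvd_or_dvd ⟨h, by rw [← hq, mul_comm]⟩).resolve_left hpg
  have : h = g * q' := mul_right_cancel₀ hp.ne_zero (by rw [hq]; ring)
  rw [Ideal.Quotient.eq_zero_iff_mem, Ideal.mem_span_singleton, this]
  exact dvd_mul_right g q'

theorem Localization.ker_algebraMap_away_eq_bot {R : Type*} [CommRing R] {v : R}
    (hv : v ∈ nonZeroDivisors R) : RingHom.ker (algebraMap R (Localization.Away v)) = ⊥ :=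
  (RingHom.injective_iff_ker_eq_bot _).mp
    (IsLocalization.injective _ (Submonoid.powers_le.mpr hv))

section BlowupChart

variable (K0 : Type) [CommRing K0] (m r l : ℕ) (π : K0)

noncomputable def blowupChartModelRel : MvPolynomial (Fin (m + 1) ⊕ Fin r) K0 :=
  (∏ i : Fin (m + 1), X (Sum.inl i)) *
    (∏ j : Fin r, (X (Sum.inr j) : MvPolynomial (Fin (m + 1) ⊕ Fin r) K0) ^ ((m + 1) * l))
    - C π

noncomputable def blowupChartModelV : MvPolynomial (Fin (m + 1) ⊕ Fin r) K0 :=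
  (∏ j : Fin r, X (Sum.inr j)) ^ l

noncomputable def blowupChartSubst :
    MvPolynomial (BlowupVars m r) K0 →ₐ[K0] MvPolynomial (Fin (m + 1) ⊕ Fin r) K0 :=
  aeval (Sum.elim (fun i => X (Sum.inl i) * blowupChartModelV K0 m r l) X)

@[simp]
theorem blowupChartSubst_X_inl (i : Fin (m + 1)) :
    blowupChartSubst K0 m r l (X (Sum.inl i)) = X (Sum.inl i) * blowupChartModelV K0 m r l :=
  aeval_X _ _

@[simp]
theorem blowupChartSubst_X_inr (s : Fin (m + 1) ⊕ Fin r) :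
    blowupChartSubst K0 m r l (X (Sum.inr s)) = X s :=
  aeval_X _ _

theorem blowupChartSubst_comp_rename_inr :
    (blowupChartSubst K0 m r l).comp (rename Sum.inr) = AlgHom.id K0 _ :=
  algHom_ext fun s => by simp

theorem blowupChartSubst_blowupV :
    blowupChartSubst K0 m r l (blowupV K0 m r l) = blowupChartModelV K0 m r l := by
  simp [blowupV, blowupChartModelV]

theorem blowupChartSubst_mem_span {p : MvPolynomial (BlowupVars m r) K0}
    (hp : p ∈ Ideal.span (blowupChartRels K0 m r l π)) :
    blowupChartSubst K0 m r l p ∈ Ideal.span {blowupChartModelRel K0 m r l π} := by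
  refine Ideal.span_le (I := (Ideal.span _).comap (blowupChartSubst K0 m r l)).mpr ?_ hp
  rintro p (rfl | ⟨i, rfl⟩)
  · apply Ideal.subset_span
    simp only [Set.mem_singleton_iff, map_sub, map_prod, blowupChartSubst_X_inl, algHom_C,
      algebraMap_eq, blowupChartModelRel, blowupChartModelV]
    rw [Finset.prod_mul_distrib, Finset.prod_const, Finset.card_univ, Fintype.card_fin,
      ← pow_mul, mul_comm l, Finset.prod_pow]
  · rw [SetLike.mem_coe, Ideal.mem_comap, map_sub, map_mul, blowupChartSubst_blowupV,
      blowupChartSubst_X_inr, blowupChartSubst_X_inl, mul_comm, sub_self]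
    exact zero_mem _

theorem rename_inr_blowupChartModelV :
    rename Sum.inr (blowupChartModelV K0 m r l) = blowupV K0 m r l := by
  simp [blowupChartModelV, blowupV]

theorem blowupChart_mk_prod :
    Ideal.Quotient.mk (Ideal.span (blowupChartRels K0 m r l π))
      (∏ i : Fin (m + 1), X (Sum.inl i)) = Ideal.Quotient.mk _ (C π) :=
  Ideal.Quotient.eq.mpr (Ideal.subset_span (Or.inl rfl))

theorem blowupChart_mk_blowupV_mul (i : Fin (m + 1)) :
    Ideal.Quotient.mk (Ideal.span (blowupChartRels K0 m r l π))
      (blowupV K0 m r l * X (Sum.inr (Sum.inl i))) = Ideal.Quotient.mk _ (X (Sum.inl i)) :=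
  Ideal.Quotient.eq.mpr (Ideal.subset_span (Or.inr ⟨i, rfl⟩))

theorem rename_inr_blowupChartModelRel_mem_span :
    rename Sum.inr (blowupChartModelRel K0 m r l π) ∈
      Ideal.span (blowupChartRels K0 m r l π) := by
  have hrename : rename Sum.inr (blowupChartModelRel K0 m r l π) =
      (∏ i : Fin (m + 1), blowupV K0 m r l * X (Sum.inr (Sum.inl i))) - C π := by
    simp only [blowupChartModelRel, blowupV, map_sub, map_mul, map_prod, map_pow, rename_X,
      rename_C, Finset.prod_mul_distrib, Finset.prod_const, Finset.card_univ, Fintype.card_fin]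
    rw [← pow_mul, mul_comm l, Finset.prod_pow, mul_comm]
  rw [← Ideal.Quotient.eq_zero_iff_mem, hrename, map_sub, map_prod]
  simp only [blowupChart_mk_blowupV_mul]
  rw [← map_prod, blowupChart_mk_prod, sub_self]

noncomputable def blowupChartQuotEquiv :
    (MvPolynomial (BlowupVars m r) K0 ⧸ Ideal.span (blowupChartRels K0 m r l π)) ≃ₐ[K0]
      (MvPolynomial (Fin (m + 1) ⊕ Fin r) K0 ⧸ Ideal.span {blowupChartModelRel K0 m r l π}) :=
  AlgEquiv.ofAlgHom
    (Ideal.Quotient.liftₐ _ ((Ideal.Quotient.mkₐ K0 _).comp (blowupChartSubst K0 m r l))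
      fun _ ha => by
        rw [AlgHom.comp_apply, Ideal.Quotient.mkₐ_eq_mk, Ideal.Quotient.eq_zero_iff_mem]
        exact blowupChartSubst_mem_span K0 m r l π ha)
    (Ideal.Quotient.liftₐ _ ((Ideal.Quotient.mkₐ K0 _).comp (rename Sum.inr))
      fun _ ha => by
        obtain ⟨c, rfl⟩ := Ideal.mem_span_singleton'.mp ha
        simp [Ideal.Quotient.eq_zero_iff_mem.mpr
          (rename_inr_blowupChartModelRel_mem_span K0 m r l π)])
    (Ideal.Quotient.algHom_ext _ <| by
      rw [AlgHom.comp_assoc, Ideal.Quotient.liftₐ_comp, ← AlgHom.comp_assoc,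
        Ideal.Quotient.liftₐ_comp, AlgHom.comp_assoc, blowupChartSubst_comp_rename_inr]
      rfl)
    (Ideal.Quotient.algHom_ext _ <| by
      rw [AlgHom.comp_assoc, Ideal.Quotient.liftₐ_comp, ← AlgHom.comp_assoc,
        Ideal.Quotient.liftₐ_comp, AlgHom.id_comp]
      refine algHom_ext fun s => ?_
      rcases s with i | s
      · rw [AlgHom.comp_apply, AlgHom.comp_apply, blowupChartSubst_X_inl, map_mul, rename_X,
          rename_inr_blowupChartModelV, mul_comm, Ideal.Quotient.mkₐ_eq_mk,
          blowupChart_mk_blowupV_mul]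
      · simp)

theorem blowupChartQuotEquiv_mk (p : MvPolynomial (BlowupVars m r) K0) :
    blowupChartQuotEquiv K0 m r l π (Ideal.Quotient.mk _ p) =
      Ideal.Quotient.mk _ (blowupChartSubst K0 m r l p) :=
  rfl

theorem constantCoeff_blowupChartModelRel :
    constantCoeff (blowupChartModelRel K0 m r l π) = -π := by
  simp [blowupChartModelRel, Finset.prod_eq_zero (Finset.mem_univ (0 : Fin (m + 1)))]

variable [IsDomain K0] {π}

theorem blowupChartModel_mk_X_inr_mem_nonZeroDivisors (hπ0 : π ≠ 0) (j : Fin r) :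
    Ideal.Quotient.mk (Ideal.span {blowupChartModelRel K0 m r l π}) (X (Sum.inr j)) ∈
      nonZeroDivisors _ := by
  refine Ideal.Quotient.mk_mem_nonZeroDivisors_of_prime_of_not_dvd X_prime
    fun ⟨w, hw⟩ => hπ0 ?_
  simpa [constantCoeff_blowupChartModelRel] using congrArg constantCoeff hw

theorem blowupChart_mk_blowupV_mem_nonZeroDivisors (hπ0 : π ≠ 0) :
    Ideal.Quotient.mk (Ideal.span (blowupChartRels K0 m r l π)) (blowupV K0 m r l) ∈
      nonZeroDivisors _ := by
  refine mem_nonZeroDivisors_of_injective (blowupChartQuotEquiv K0 m r l π).injective ?_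
  rw [blowupChartQuotEquiv_mk, blowupChartSubst_blowupV, blowupChartModelV, map_pow, map_prod]
  exact pow_mem
    (prod_mem fun j _ => blowupChartModel_mk_X_inr_mem_nonZeroDivisors K0 m r l hπ0 j) l

end BlowupChart

theorem stmt9_general (K0 : Type) [CommRing K0] [IsDomain K0]
    (π : K0) (hπ0 : π ≠ 0) (m r l : ℕ) :
    Nonempty (blowupChart K0 m r l π ≃+* blowupChartModel K0 m r l π) :=
  ⟨((Ideal.quotEquivOfEq (Localization.ker_algebraMap_away_eq_bot
      (blowupChart_mk_blowupV_mem_nonZeroDivisors K0 m r l hπ0))).trans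
    (RingEquiv.quotientBot _)).trans (blowupChartQuotEquiv K0 m r l π).toRingEquiv⟩

/-- over a valuation ring `k°` with nonzero nonunit `π`, the `v`-chart
(`v = (v₁⋯v_r)^l`, `l > 0`) of the blowing up of
`Spec k°[t,v]/(t₀⋯t_m − π)` along `(t₀,…,t_m,v)` is isomorphic to
`Spec k°[t',v]/(t'₀⋯t'_m·v₁^d⋯v_r^d − π)` with `d = (m+1)l`, where `t'ᵢ ↦ tᵢ/v`. -/
theorem stmt9 (K0 : Type) [CommRing K0] [IsDomain K0] [ValuationRing K0]
    (π : K0) (hπ0 : π ≠ 0) (hπu : ¬ IsUnit π) (m r l : ℕ) (hl : 0 < l) :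
    Nonempty (blowupChart K0 m r l π ≃+* blowupChartModel K0 m r l π) :=
  stmt9_general K0 π hπ0 m r l
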